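/- Let ε₁, ε₂ ∈ {1, −1}, let M, D, K ∈ ℂ^{n×n} satisfy M* = ε₁M, D* = ε₂D, K* = ε₁K, and let (X_c, Λ_c) ∈ ℂ^{n×p₁} × ℂ^{p₁×p₁} and (X_f, Λ_f) ∈ ℂ^{n×p₂} × ℂ^{p₂×p₂} be invariant pairs of Q(λ) = λ²M + λD + K. Let Λ_a ∈ ℂ^{p₁×p₁}. Assume (1) the spectra of Λ_c and ε₁ε₂Λ_f* are disjoint, and (2) R := X_c* M X_c Λ_a + ε₁ε₂ Λ_c* X_c* M X_c + X_c* D X_c is invertible. Set Z := (Λ_c − Λ_a)R⁻¹ and define ΔM := M X_c Z X_c* M, ΔD := ε₁ε₂ M X_c Z Λ_c* X_c* M + M X_c Z X_c* D + M X_c Λ_c Z X_c* M + D X_c Z X_c* M, ΔK := ε₁ε₂ M X_c Λ_c Z Λ_c* X_c* M + M X_c Λ_c Z X_c* D + ε₁ε₂ D X_c Z Λ_c* X_c* M + D X_c Z X_c* D. Then both (X_c, Λ_a) and (X_f, Λ_f) are invariant pairs of Q_Δ(λ) = λ²(M+ΔM) + λ(D+ΔD) + (K+ΔK). -/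

import Mathlib

open Matrix Polynomial

lemma my_eval_charpoly {p : ℕ} (A : Matrix (Fin p) (Fin p) ℂ) (μ : ℂ) :
    A.charpoly.eval μ = (μ • (1 : Matrix (Fin p) (Fin p) ℂ) - A).det := by
  rw [Matrix.charpoly, ← Polynomial.coe_evalRingHom, RingHom.map_det]
  congr 1
  ext i j
  by_cases h : i = j <;>
    simp [charmatrix_apply, Matrix.one_apply, Matrix.diagonal_apply, h]

lemma my_aeval_intertwine {p q : ℕ} (A : Matrix (Fin p) (Fin p) ℂ)
    (B : Matrix (Fin q) (Fin q) ℂ) (S : Matrix (Fin p) (Fin q) ℂ)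
    (h : A * S = S * B) (f : ℂ[X]) :
    (aeval A f) * S = S * (aeval B f) := by
  induction f using Polynomial.induction_on with
  | C a => simp [Algebra.algebraMap_eq_smul_one, smul_mul_assoc, mul_smul_comm]
  | add f g hf hg => simp [map_add, Matrix.add_mul, Matrix.mul_add, hf, hg]
  | monomial k a ih =>
      have hA : aeval A (C a * X ^ (k + 1)) = aeval A (C a * X ^ k) * A := by
        rw [pow_succ, ← mul_assoc, _root_.map_mul, aeval_X]
      have hB : aeval B (C a * X ^ (k + 1)) = aeval B (C a * X ^ k) * B := by
        rw [pow_succ, ← mul_assoc, _root_.map_mul, aeval_X]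
      rw [hA, hB, Matrix.mul_assoc, h, ← Matrix.mul_assoc, ih, Matrix.mul_assoc]

lemma my_sylvester {p q : ℕ} (A : Matrix (Fin p) (Fin p) ℂ)
    (B : Matrix (Fin q) (Fin q) ℂ) (S : Matrix (Fin p) (Fin q) ℂ)
    (h : A * S = S * B)
    (hd : ∀ μ : ℂ, ¬ ((μ • (1 : Matrix (Fin p) (Fin p) ℂ) - A).det = 0 ∧
      (μ • (1 : Matrix (Fin q) (Fin q) ℂ) - B).det = 0)) : S = 0 := by
  have hsplit : B.charpoly.Splits := IsAlgClosed.splits B.charpoly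
  have hprod : B.charpoly = (B.charpoly.roots.toList.map fun a => X - C a).prod := by
    conv_lhs => rw [hsplit.eq_prod_roots_of_monic B.charpoly_monic,
      ← Multiset.coe_toList B.charpoly.roots, Multiset.map_coe, Multiset.prod_coe]
  have hunit : IsUnit (aeval A B.charpoly).det := by
    rw [isUnit_iff_ne_zero]
    have heq : aeval A B.charpoly = (B.charpoly.roots.toList.map fun μ => A - μ • 1).prod := by
      conv_lhs => rw [hprod]
      rw [map_list_prod, List.map_map]
      congr 1
      refine List.map_congr_left ?_
      intro μ _
      simp [Algebra.algebraMap_eq_smul_one]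
    rw [heq, ← Matrix.coe_detMonoidHom, map_list_prod, List.map_map]
    intro hz
    rw [List.prod_eq_zero_iff] at hz
    simp only [List.mem_map, Function.comp] at hz
    obtain ⟨μ, hμ, hdet⟩ := hz
    have hroot : B.charpoly.eval μ = 0 :=
      isRoot_of_mem_roots (Multiset.mem_toList.mp hμ)
    rw [my_eval_charpoly] at hroot
    have hdet2 : (A - μ • (1 : Matrix (Fin p) (Fin p) ℂ)).det = 0 := hdet
    rw [(neg_sub (μ • (1 : Matrix (Fin p) (Fin p) ℂ)) A).symm, Matrix.det_neg] at hdet2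
    rcases mul_eq_zero.mp hdet2 with h1 | h1
    · exact absurd h1 (by simp)
    · exact hd μ ⟨h1, hroot⟩
  have hzero : (aeval A B.charpoly) * S = 0 := by
    rw [my_aeval_intertwine A B S h B.charpoly, Matrix.aeval_self_charpoly, Matrix.mul_zero]
  calc S = ((aeval A B.charpoly)⁻¹ * (aeval A B.charpoly)) * S := by
        rw [Matrix.nonsing_inv_mul _ hunit, Matrix.one_mul]
    _ = (aeval A B.charpoly)⁻¹ * ((aeval A B.charpoly) * S) := by rw [Matrix.mul_assoc]
    _ = 0 := by rw [hzero, Matrix.mul_zero]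

/-- No-spillover perturbation (Theorem 3.5): under the spectral
disjointness of `Λ_c` and `ε₁ε₂Λ_fᴴ` and invertibility of `R`, the stated
perturbations make `(X_c, Λ_a)` and `(X_f, Λ_f)` invariant pairs of the
perturbed polynomial. -/
theorem structured_quadratic_no_spillover
    {n p₁ p₂ : ℕ} (ε₁ ε₂ : ℂ)
    (hε₁ : ε₁ = 1 ∨ ε₁ = -1) (hε₂ : ε₂ = 1 ∨ ε₂ = -1)
    (M D K : Matrix (Fin n) (Fin n) ℂ)
    (hM : Mᴴ = ε₁ • M) (hD : Dᴴ = ε₂ • D) (hK : Kᴴ = ε₁ • K)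
    (Xc : Matrix (Fin n) (Fin p₁) ℂ) (Λc : Matrix (Fin p₁) (Fin p₁) ℂ)
    (Xf : Matrix (Fin n) (Fin p₂) ℂ) (Λf : Matrix (Fin p₂) (Fin p₂) ℂ)
    (hc : M * Xc * Λc ^ 2 + D * Xc * Λc + K * Xc = 0)
    (hf : M * Xf * Λf ^ 2 + D * Xf * Λf + K * Xf = 0)
    (Λa : Matrix (Fin p₁) (Fin p₁) ℂ)
    (hdisj : ∀ μ : ℂ, ¬ ((μ • (1 : Matrix (Fin p₁) (Fin p₁) ℂ) - Λc).det = 0 ∧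
      (μ • (1 : Matrix (Fin p₂) (Fin p₂) ℂ) - (ε₁ * ε₂) • Λfᴴ).det = 0))
    (R : Matrix (Fin p₁) (Fin p₁) ℂ)
    (hRdef : R = Xcᴴ * M * Xc * Λa + (ε₁ * ε₂) • (Λcᴴ * (Xcᴴ * M * Xc)) + Xcᴴ * D * Xc)
    (hR : IsUnit R.det)
    (Z : Matrix (Fin p₁) (Fin p₁) ℂ) (hZ : Z = (Λc - Λa) * R⁻¹)
    (ΔM ΔD ΔK : Matrix (Fin n) (Fin n) ℂ)
    (hΔM : ΔM = M * Xc * Z * Xcᴴ * M)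
    (hΔD : ΔD = (ε₁ * ε₂) • (M * Xc * Z * Λcᴴ * Xcᴴ * M) + M * Xc * Z * Xcᴴ * D
              + M * Xc * Λc * Z * Xcᴴ * M + D * Xc * Z * Xcᴴ * M)
    (hΔK : ΔK = (ε₁ * ε₂) • (M * Xc * Λc * Z * Λcᴴ * Xcᴴ * M) + M * Xc * Λc * Z * Xcᴴ * D
              + (ε₁ * ε₂) • (D * Xc * Z * Λcᴴ * Xcᴴ * M) + D * Xc * Z * Xcᴴ * D) :
    (M + ΔM) * Xc * Λa ^ 2 + (D + ΔD) * Xc * Λa + (K + ΔK) * Xc = 0 ∧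
    (M + ΔM) * Xf * Λf ^ 2 + (D + ΔD) * Xf * Λf + (K + ΔK) * Xf = 0 := by
  have he1 : ε₁ * ε₁ = 1 := by rcases hε₁ with h | h <;> simp [h]
  have hee : (ε₁ * ε₂) * (ε₁ * ε₂) = 1 := by
    rcases hε₁ with h | h <;> rcases hε₂ with h' | h' <;> simp [h, h']
  have hne : ε₁ * ε₂ ≠ 0 := by
    rcases hε₁ with h | h <;> rcases hε₂ with h' | h' <;> simp [h, h']
  have hstar : (starRingEnd ℂ) (ε₁ * ε₂) = ε₁ * ε₂ := by
    rcases hε₁ with h | h <;> rcases hε₂ with h' | h' <;> simp [h, h']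
  have hs1 : (starRingEnd ℂ) ε₁ = ε₁ := by rcases hε₁ with h | h <;> simp [h]
  have hs2 : (starRingEnd ℂ) ε₂ = ε₂ := by rcases hε₂ with h | h <;> simp [h]
  have hZR : Z * (Xcᴴ * M * Xc * Λa + (ε₁ * ε₂) • (Λcᴴ * (Xcᴴ * M * Xc)) + Xcᴴ * D * Xc)
      = Λc - Λa := by
    rw [← hRdef, hZ, Matrix.mul_assoc, Matrix.nonsing_inv_mul R hR, Matrix.mul_one]
  -- the fine-tuning residual S
  set S : Matrix (Fin p₁) (Fin p₂) ℂ :=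
    Xcᴴ * M * Xf * Λf + (ε₁ * ε₂) • (Λcᴴ * (Xcᴴ * M * Xf)) + Xcᴴ * D * Xf with hSdef
  have h1 : Λcᴴ * (Λcᴴ * (Xcᴴ * (M * Xf))) + (ε₁ * ε₂) • (Λcᴴ * (Xcᴴ * (D * Xf)))
      + Xcᴴ * (K * Xf) = 0 := by
    have h0 := congrArg (fun Y : Matrix (Fin n) (Fin p₁) ℂ => ε₁ • (Yᴴ * Xf)) hc
    simp only [pow_two, conjTranspose_add, conjTranspose_mul, conjTranspose_zero,
      Matrix.zero_mul, smul_zero, hM, hD, hK, Matrix.add_mul, Matrix.smul_mul,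
      Matrix.mul_smul, smul_add, smul_smul, he1, one_smul, Matrix.mul_assoc] at h0
    rw [← h0]
  have h2 : Xcᴴ * (M * (Xf * (Λf * Λf))) + Xcᴴ * (D * (Xf * Λf)) + Xcᴴ * (K * Xf) = 0 := by
    have h0 := congrArg (fun Y : Matrix (Fin n) (Fin p₂) ℂ => Xcᴴ * Y) hf
    simp only [pow_two, Matrix.mul_add, Matrix.mul_zero, Matrix.mul_assoc] at h0
    rw [← h0]
  have hsyl : ((ε₁ * ε₂) • Λcᴴ) * S = S * Λf := by
    have key : ((ε₁ * ε₂) • Λcᴴ) * S - S * Λf =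
        (Λcᴴ * (Λcᴴ * (Xcᴴ * (M * Xf))) + (ε₁ * ε₂) • (Λcᴴ * (Xcᴴ * (D * Xf)))
          + Xcᴴ * (K * Xf))
        - (Xcᴴ * (M * (Xf * (Λf * Λf))) + Xcᴴ * (D * (Xf * Λf)) + Xcᴴ * (K * Xf)) := by
      simp only [hSdef, Matrix.mul_add, Matrix.add_mul, Matrix.smul_mul, Matrix.mul_smul,
        smul_add, smul_smul, hee, one_smul, Matrix.mul_assoc]
      abel
    rw [h1, h2, sub_zero] at key
    exact sub_eq_zero.mp key
  have hdisj' : ∀ μ : ℂ, ¬ ((μ • (1 : Matrix (Fin p₁) (Fin p₁) ℂ) - (ε₁ * ε₂) • Λcᴴ).det = 0 ∧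
      (μ • (1 : Matrix (Fin p₂) (Fin p₂) ℂ) - Λf).det = 0) := by
    rintro μ ⟨hA, hB⟩
    set ν : ℂ := (ε₁ * ε₂) * (starRingEnd ℂ) μ with hν
    apply hdisj ν
    constructor
    · have e1 : (μ • (1 : Matrix (Fin p₁) (Fin p₁) ℂ) - (ε₁ * ε₂) • Λcᴴ)ᴴ
          = (ε₁ * ε₂) • (ν • (1 : Matrix (Fin p₁) (Fin p₁) ℂ) - Λc) := by
        rw [conjTranspose_sub, conjTranspose_smul, conjTranspose_smul, conjTranspose_one,
          conjTranspose_conjTranspose, smul_sub, smul_smul, hν, ← mul_assoc, hee, one_mul]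
        simp [Complex.star_def, hs1, hs2]
      have e2 : ((μ • (1 : Matrix (Fin p₁) (Fin p₁) ℂ) - (ε₁ * ε₂) • Λcᴴ)ᴴ).det = 0 := by
        rw [Matrix.det_conjTranspose, hA, star_zero]
      rw [e1, Matrix.det_smul] at e2
      rcases mul_eq_zero.mp e2 with h' | h'
      · exact absurd h' (pow_ne_zero _ hne)
      · exact h'
    · have e1 : (ν • (1 : Matrix (Fin p₂) (Fin p₂) ℂ) - (ε₁ * ε₂) • Λfᴴ)ᴴ
          = (ε₁ * ε₂) • (μ • (1 : Matrix (Fin p₂) (Fin p₂) ℂ) - Λf) := by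
        rw [conjTranspose_sub, conjTranspose_smul, conjTranspose_smul, conjTranspose_one,
          conjTranspose_conjTranspose, smul_sub, smul_smul, hν]
        simp [Complex.star_def, hs1, hs2, Complex.conj_conj, ← mul_assoc, hee]
      have e2 : ((ν • (1 : Matrix (Fin p₂) (Fin p₂) ℂ) - (ε₁ * ε₂) • Λfᴴ)ᴴ).det = 0 := by
        rw [e1, Matrix.det_smul, hB, mul_zero]
      rw [Matrix.det_conjTranspose] at e2
      exact star_eq_zero.mp e2
  have hS0 : S = 0 := my_sylvester _ _ _ hsyl hdisj'
  constructor
  · have E1 : (M + ΔM) * Xc * Λa ^ 2 + (D + ΔD) * Xc * Λa + (K + ΔK) * Xc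
        = (M * Xc * Λc ^ 2 + D * Xc * Λc + K * Xc)
        + M * (Xc * ((Z * (Xcᴴ * M * Xc * Λa + (ε₁ * ε₂) • (Λcᴴ * (Xcᴴ * M * Xc))
            + Xcᴴ * D * Xc) - (Λc - Λa)) * Λa))
        + M * (Xc * (Λc * (Z * (Xcᴴ * M * Xc * Λa + (ε₁ * ε₂) • (Λcᴴ * (Xcᴴ * M * Xc))
            + Xcᴴ * D * Xc) - (Λc - Λa))))
        + D * (Xc * (Z * (Xcᴴ * M * Xc * Λa + (ε₁ * ε₂) • (Λcᴴ * (Xcᴴ * M * Xc))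
            + Xcᴴ * D * Xc) - (Λc - Λa))) := by
      simp only [hΔM, hΔD, hΔK, pow_two, Matrix.add_mul, Matrix.mul_add, Matrix.mul_sub,
        Matrix.sub_mul, Matrix.smul_mul, Matrix.mul_smul, smul_add, smul_sub,
        Matrix.mul_assoc]
      abel
    rw [E1, hZR, sub_self, hc]
    simp
  · have E2 : (M + ΔM) * Xf * Λf ^ 2 + (D + ΔD) * Xf * Λf + (K + ΔK) * Xf
        = (M * Xf * Λf ^ 2 + D * Xf * Λf + K * Xf)
        + M * (Xc * (Z * (S * Λf))) + M * (Xc * (Λc * (Z * S))) + D * (Xc * (Z * S)) := by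
      simp only [hSdef, hΔM, hΔD, hΔK, pow_two, Matrix.add_mul, Matrix.mul_add,
        Matrix.smul_mul, Matrix.mul_smul, smul_add, Matrix.mul_assoc]
      abel
    rw [E2, hS0, hf]
    simp
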